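/- arXiv:1103.0270 — 3 statements merged into one kernel-verified Lean document; each statement's English description precedes it below -/
import Mathlib

section
/- Let M and K be positive integers. Let x = (x_{i,k})_{i \in \{1,\dots,M\}, k \in \{1,\dots,K\}} be a random vector in \mathbb{R}^{MK} whose joint distribution is absolutely continuous with respect to Lebesgue measure on \mathbb{R}^{MK}. For integers \alpha_{i,j,k} (1 \le i,j \le M, 1 \le k \le K), suppose that for every row index i and every pair of distinct column indices j \ne j', the exponent tuples (\alpha_{i,j,1},\dots,\alpha_{i,j,K}) and (\alpha_{i,j',1},\dots,\alpha_{i,j',K}) are not equal. Then, with probability 1, all x_{i,k} are nonzero and the M \times M matrix A with entries A_{i,j} = \prod_{k=1}^K x_{i,k}^{\alpha_{i,j,k}} (integer powers) is invertible. -/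
open MeasureTheory

/-- The zero set of a nonzero multivariate polynomial over `Fin n` has Lebesgue measure zero. -/
lemma mvpoly_zero_null_fin (n : ℕ) (P : MvPolynomial (Fin n) ℝ) (hP : P ≠ 0) :
    volume {y : Fin n → ℝ | MvPolynomial.eval y P = 0} = 0 := by
  induction n with
  | zero =>
    obtain ⟨a, rfl⟩ := MvPolynomial.C_surjective (Fin 0) P
    have ha : a ≠ 0 := fun h => hP (by rw [h, map_zero])
    have : {y : Fin 0 → ℝ | MvPolynomial.eval y (MvPolynomial.C a) = 0} = ∅ := by
      ext y; simp [ha]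
    rw [this]; simp
  | succ n ih =>
    set Q := MvPolynomial.finSuccEquiv ℝ n P with hQdef
    have hQ : Q ≠ 0 := by
      intro h
      apply hP
      have := congrArg (MvPolynomial.finSuccEquiv ℝ n).symm h
      simpa [hQdef] using this
    have hlc : Q.leadingCoeff ≠ 0 := Polynomial.leadingCoeff_ne_zero.mpr hQ
    set S : Set (ℝ × (Fin n → ℝ)) :=
      {p | MvPolynomial.eval (Fin.cons p.1 p.2) P = 0} with hSdef
    have hcont : Continuous fun p : ℝ × (Fin n → ℝ) =>
        MvPolynomial.eval (Fin.cons p.1 p.2 : Fin (n+1) → ℝ) P := by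
      apply (MvPolynomial.continuous_eval P).comp
      apply continuous_pi
      intro i
      refine Fin.cases ?_ ?_ i
      · exact continuous_fst
      · intro j
        exact (continuous_apply j).comp continuous_snd
    have hSmeas : MeasurableSet S :=
      hcont.measurable (measurableSet_singleton 0)
    have hT : (volume.prod volume) (Prod.swap ⁻¹' S : Set ((Fin n → ℝ) × ℝ)) = 0 := by
      rw [MeasureTheory.Measure.measure_prod_null (measurable_swap hSmeas)]
      filter_upwards [measure_eq_zero_iff_ae_notMem.mp (ih Q.leadingCoeff hlc)] with s hs
      have hq : Polynomial.map (MvPolynomial.eval s) Q ≠ 0 := by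
        intro h
        have h2 : (Polynomial.map (MvPolynomial.eval s) Q).coeff Q.natDegree = 0 := by
          rw [h, Polynomial.coeff_zero]
        rw [Polynomial.coeff_map] at h2
        exact hs h2
      have hsub : (Prod.mk s ⁻¹' (Prod.swap ⁻¹' S)) ⊆
          {a : ℝ | Polynomial.IsRoot (Polynomial.map (MvPolynomial.eval s) Q) a} := by
        intro a ha
        simp only [Set.mem_preimage, Prod.swap_prod_mk, hSdef, Set.mem_setOf_eq] at ha ⊢
        rw [MvPolynomial.eval_eq_eval_mv_eval'] at ha
        exact ha
      exact measure_mono_null hsub ((Polynomial.finite_setOf_isRoot hq).measure_zero _)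
    have hS : (volume.prod volume) S = 0 := by
      have : (volume.prod volume) S
          = Measure.map Prod.swap ((volume : Measure (Fin n → ℝ)).prod volume) S := by
        rw [Measure.prod_swap]
      rw [this, Measure.map_apply measurable_swap hSmeas]
      exact hT
    -- transfer via piFinSuccAbove
    have hmp := volume_preserving_piFinSuccAbove (fun _ : Fin (n+1) => ℝ) 0
    have hpre : (MeasurableEquiv.piFinSuccAbove (fun _ : Fin (n+1) => ℝ) 0) ⁻¹' S
        = {y : Fin (n+1) → ℝ | MvPolynomial.eval y P = 0} := by
      ext y
      have hy : (Fin.cons ((MeasurableEquiv.piFinSuccAbove (fun _ : Fin (n+1) => ℝ) 0) y).1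
          ((MeasurableEquiv.piFinSuccAbove (fun _ : Fin (n+1) => ℝ) 0) y).2 : Fin (n+1) → ℝ) = y := by
        show (Fin.cons (y 0) (Fin.removeNth 0 y) : Fin (n+1) → ℝ) = y
        rw [Fin.removeNth_zero, Fin.cons_self_tail]
      simp only [Set.mem_preimage, hSdef, Set.mem_setOf_eq]
      rw [hy]
    rw [← hpre]
    rw [hmp.measure_preimage hSmeas.nullMeasurableSet]
    exact hS

/-- Zero set of a nonzero multivariate polynomial over any finite index type is null. -/
lemma mvpoly_zero_null (ι : Type*) [Fintype ι] (P : MvPolynomial ι ℝ) (hP : P ≠ 0) :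
    (volume : Measure (ι → ℝ)) {y : ι → ℝ | MvPolynomial.eval y P = 0} = 0 := by
  classical
  set n := Fintype.card ι
  set e : Fin n ≃ ι := (Fintype.equivFin ι).symm with he
  set E := MeasurableEquiv.piCongrLeft (fun _ : ι => ℝ) e with hE
  have hmp : MeasurePreserving E (volume : Measure (Fin n → ℝ)) (volume : Measure (ι → ℝ)) :=
    MeasureTheory.volume_measurePreserving_piCongrLeft (fun _ : ι => ℝ) e
  have hmeas : MeasurableSet {y : ι → ℝ | MvPolynomial.eval y P = 0} :=
    (MvPolynomial.continuous_eval P).measurable (measurableSet_singleton 0)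
  rw [← hmp.measure_preimage hmeas.nullMeasurableSet]
  have hEapp : ∀ (z : Fin n → ℝ) (a : ι), E z a = z (e.symm a) := by
    intro z a
    have : E z (e (e.symm a)) = z (e.symm a) := by
      rw [hE, MeasurableEquiv.coe_piCongrLeft]
      exact Equiv.piCongrLeft_apply_apply (fun _ : ι => ℝ) e z (e.symm a)
    simpa using this
  have hpre : E ⁻¹' {y : ι → ℝ | MvPolynomial.eval y P = 0}
      = {z : Fin n → ℝ | MvPolynomial.eval z (MvPolynomial.rename e.symm P) = 0} := by
    ext z
    simp only [Set.mem_preimage, Set.mem_setOf_eq, MvPolynomial.eval_rename]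
    have : E z = z ∘ e.symm := funext fun a => hEapp z a
    rw [this]
  rw [hpre]
  exact mvpoly_zero_null_fin n (MvPolynomial.rename e.symm P)
    (fun h => hP (MvPolynomial.rename_injective (e.symm : ι → Fin n) e.symm.injective
      (by rw [h, map_zero])))

/-- Uncurrying is measure preserving from `(Fin m → Fin K → ℝ)` to the pi measure
over `Fin m × Fin K`. -/
lemma curry_measurePreserving (m K : ℕ) :
    MeasurePreserving (fun (y : Fin m → Fin K → ℝ) (p : Fin m × Fin K) => y p.1 p.2)
      (volume : Measure (Fin m → Fin K → ℝ))
      (volume : Measure (Fin m × Fin K → ℝ)) := by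
  induction m with
  | zero =>
    have hg : Measurable (fun (y : Fin 0 → Fin K → ℝ) (p : Fin 0 × Fin K) => y p.1 p.2) :=
      measurable_pi_lambda _ fun p => (measurable_pi_apply p.2).comp (measurable_pi_apply p.1)
    refine ⟨hg, ?_⟩
    rw [MeasureTheory.volume_pi, Measure.pi_of_empty, Measure.map_dirac' hg]
    conv_rhs => rw [MeasureTheory.volume_pi, Measure.pi_of_empty]
    congr 1
    exact Subsingleton.elim _ _
  | succ m ih =>
    let ee : (Fin K ⊕ (Fin m × Fin K)) ≃ (Fin (m+1) × Fin K) :=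
      { toFun := fun q => Sum.elim (fun k => ((0 : Fin (m+1)), k)) (fun p => (p.1.succ, p.2)) q
        invFun := fun p => Fin.cases (Sum.inl p.2) (fun i => Sum.inr (i, p.2)) p.1
        left_inv := by rintro (k | ⟨i, k⟩) <;> simp
        right_inv := by
          rintro ⟨i, k⟩
          refine Fin.cases ?_ ?_ i <;> simp }
    have h1 : MeasurePreserving
        (MeasurableEquiv.piFinSuccAbove (fun _ : Fin (m+1) => (Fin K → ℝ)) 0)
        volume volume :=
      volume_preserving_piFinSuccAbove _ 0
    have h2 : MeasurePreserving
        (Prod.map (id : (Fin K → ℝ) → (Fin K → ℝ))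
          (fun (y : Fin m → Fin K → ℝ) (p : Fin m × Fin K) => y p.1 p.2))
        (volume : Measure ((Fin K → ℝ) × (Fin m → Fin K → ℝ)))
        (volume : Measure ((Fin K → ℝ) × (Fin m × Fin K → ℝ))) :=
      (MeasurePreserving.id volume).prod ih
    have h3 : MeasurePreserving
        (MeasurableEquiv.sumPiEquivProdPi (fun _ : Fin K ⊕ (Fin m × Fin K) => ℝ)).symm
        (volume : Measure ((Fin K → ℝ) × (Fin m × Fin K → ℝ)))
        (volume : Measure (Fin K ⊕ (Fin m × Fin K) → ℝ)) :=
      MeasureTheory.volume_measurePreserving_sumPiEquivProdPi_symm _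
    have h4 : MeasurePreserving
        (MeasurableEquiv.piCongrLeft (fun _ : Fin (m+1) × Fin K => ℝ) ee)
        (volume : Measure (Fin K ⊕ (Fin m × Fin K) → ℝ))
        (volume : Measure (Fin (m+1) × Fin K → ℝ)) :=
      MeasureTheory.volume_measurePreserving_piCongrLeft _ ee
    have hcomp := ((h4.comp h3).comp h2).comp h1
    have hfun : (fun (y : Fin (m+1) → Fin K → ℝ) (p : Fin (m+1) × Fin K) => y p.1 p.2)
        = (⇑(MeasurableEquiv.piCongrLeft (fun _ : Fin (m+1) × Fin K => ℝ) ee) ∘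
            ⇑(MeasurableEquiv.sumPiEquivProdPi (fun _ : Fin K ⊕ (Fin m × Fin K) => ℝ)).symm ∘
            (Prod.map (id : (Fin K → ℝ) → (Fin K → ℝ))
              (fun (y : Fin m → Fin K → ℝ) (p : Fin m × Fin K) => y p.1 p.2)) ∘
            ⇑(MeasurableEquiv.piFinSuccAbove (fun _ : Fin (m+1) => (Fin K → ℝ)) 0)) := by
      funext y p
      obtain ⟨q, rfl⟩ : ∃ q, ee q = p := ⟨ee.symm p, ee.apply_symm_apply p⟩
      simp only [Function.comp_apply, MeasurableEquiv.coe_piCongrLeft,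
        MeasurableEquiv.coe_sumPiEquivProdPi_symm]
      cases q with
      | inl k =>
        rw [Equiv.piCongrLeft_sumInl]
        show y ((0 : Fin (m+1)), k).1 ((0 : Fin (m+1)), k).2 = _
        rfl
      | inr ik =>
        rw [Equiv.piCongrLeft_sumInr]
        show y (ik.1.succ, ik.2).1 (ik.1.succ, ik.2).2 = _
        show y ik.1.succ ik.2 = Fin.removeNth 0 y ik.1 ik.2
        rw [Fin.removeNth_zero]
        rfl
    rw [hfun]
    exact hcomp

lemma prod_monomial_one {σ' ι : Type*} (s : Finset ι) (d : ι → (σ' →₀ ℕ)) :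
    (∏ i ∈ s, (MvPolynomial.monomial (d i) (1 : ℝ))) = MvPolynomial.monomial (∑ i ∈ s, d i) 1 := by
  classical
  induction s using Finset.cons_induction with
  | empty => simp
  | cons a s ha ih =>
    rw [Finset.prod_cons, Finset.sum_cons, ih, MvPolynomial.monomial_mul, one_mul]

lemma det_monomial_ne_zero (M K : ℕ) (β : Fin M → Fin M → Fin K → ℕ)
    (hβ : ∀ i j j', j ≠ j' → (fun k => β i j k) ≠ (fun k => β i j' k)) :
    Matrix.det (Matrix.of fun i j : Fin M =>
      ∏ k, (MvPolynomial.X (i, k) : MvPolynomial (Fin M × Fin K) ℝ) ^ β i j k) ≠ 0 := by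
  classical
  set D : Equiv.Perm (Fin M) → ((Fin M × Fin K) →₀ ℕ) :=
    fun σ => ∑ j, ∑ k, Finsupp.single (σ j, k) (β (σ j) j k) with hD
  have hprod : ∀ σ : Equiv.Perm (Fin M),
      (∏ j, (Matrix.of fun i j : Fin M =>
        ∏ k, (MvPolynomial.X (i, k) : MvPolynomial (Fin M × Fin K) ℝ) ^ β i j k) (σ j) j)
      = MvPolynomial.monomial (D σ) 1 := by
    intro σ
    have : ∀ j : Fin M,
        (∏ k, (MvPolynomial.X ((σ j), k) : MvPolynomial (Fin M × Fin K) ℝ) ^ β (σ j) j k)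
        = MvPolynomial.monomial (∑ k, Finsupp.single ((σ j), k) (β (σ j) j k)) 1 := by
      intro j
      rw [← prod_monomial_one]
      refine Finset.prod_congr rfl fun k _ => ?_
      rw [MvPolynomial.X_pow_eq_monomial]
    calc (∏ j, (Matrix.of fun i j : Fin M =>
        ∏ k, (MvPolynomial.X (i, k) : MvPolynomial (Fin M × Fin K) ℝ) ^ β i j k) (σ j) j)
        = ∏ j, MvPolynomial.monomial (∑ k, Finsupp.single ((σ j), k) (β (σ j) j k)) (1:ℝ) := by
          refine Finset.prod_congr rfl fun j _ => ?_
          rw [Matrix.of_apply]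
          exact this j
      _ = MvPolynomial.monomial (D σ) 1 := by rw [prod_monomial_one]
  have hDval : ∀ (σ : Equiv.Perm (Fin M)) (i' : Fin M) (k' : Fin K),
      D σ (i', k') = β i' (σ.symm i') k' := by
    intro σ i' k'
    rw [hD]
    rw [Finsupp.finset_sum_apply]
    rw [Finset.sum_eq_single (σ.symm i')]
    · rw [Finsupp.finset_sum_apply, Finset.sum_eq_single k']
      · rw [Finsupp.single_apply, Equiv.apply_symm_apply, if_pos rfl]
      · intro k _ hk
        rw [Finsupp.single_apply, if_neg]
        intro h
        exact hk (Prod.ext_iff.mp h).2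
      · intro h; exact absurd (Finset.mem_univ k') h
    · intro j _ hj
      rw [Finsupp.finset_sum_apply]
      refine Finset.sum_eq_zero fun k _ => ?_
      rw [Finsupp.single_apply, if_neg]
      intro h
      have : σ j = i' := (Prod.ext_iff.mp h).1
      exact hj (by rw [← this, Equiv.symm_apply_apply])
    · intro h; exact absurd (Finset.mem_univ _) h
  have hDinj : ∀ σ : Equiv.Perm (Fin M), D σ = D 1 → σ = 1 := by
    intro σ h
    have hsymm : ∀ i', σ.symm i' = i' := by
      intro i'
      by_contra hne
      refine hβ i' (σ.symm i') i' hne (funext fun k => ?_)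
      have h2 := congrArg (fun d : (Fin M × Fin K) →₀ ℕ => d (i', k)) h
      simp only [hDval σ i' k, hDval 1 i' k] at h2
      exact h2
    refine Equiv.ext fun i => ?_
    have h3 := hsymm (σ i)
    rw [Equiv.symm_apply_apply] at h3
    simpa using h3.symm
  intro hzero
  have hcoeff := congrArg (MvPolynomial.coeff (D 1)) hzero
  rw [Matrix.det_apply', MvPolynomial.coeff_sum, MvPolynomial.coeff_zero] at hcoeff
  have hterm : ∀ σ : Equiv.Perm (Fin M),
      MvPolynomial.coeff (D 1) (((Equiv.Perm.sign σ : ℤ) : MvPolynomial (Fin M × Fin K) ℝ)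
        * ∏ j, (Matrix.of fun i j : Fin M =>
          ∏ k, (MvPolynomial.X (i, k) : MvPolynomial (Fin M × Fin K) ℝ) ^ β i j k) (σ j) j)
      = if D σ = D 1 then ((Equiv.Perm.sign σ : ℤ) : ℝ) else 0 := by
    intro σ
    rw [hprod σ]
    rw [show (((Equiv.Perm.sign σ : ℤ)) : MvPolynomial (Fin M × Fin K) ℝ)
      = MvPolynomial.C (((Equiv.Perm.sign σ : ℤ)) : ℝ) from (map_intCast
        (MvPolynomial.C : ℝ →+* MvPolynomial (Fin M × Fin K) ℝ) _).symm.trans (by norm_cast)]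
    rw [MvPolynomial.C_mul_monomial, mul_one, MvPolynomial.coeff_monomial]
  rw [Finset.sum_congr rfl (fun σ _ => hterm σ)] at hcoeff
  rw [Finset.sum_eq_single (1 : Equiv.Perm (Fin M))
    (fun b _ hb => by rw [if_neg (fun hh => hb (hDinj b hh))])
    (fun h => absurd (Finset.mem_univ _) h)] at hcoeff
  rw [if_pos rfl] at hcoeff
  simp at hcoeff

/-- Full-rank lemma (Cadambe–Jafar, Lemma 1): if the joint law of the random
variables `x i k` is absolutely continuous w.r.t. Lebesgue measure, and in each
row `i` any two columns `j ≠ j'` have distinct exponent tuples, then almost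
surely all variables are nonzero and the monomial matrix
`A i j = ∏ k, (x i k) ^ (α i j k)` is invertible. -/
theorem monomial_matrix_full_rank_as
    (M K : ℕ) (hM : 0 < M) (hK : 0 < K)
    {Ω : Type*} [MeasurableSpace Ω] (ℙ : Measure Ω) [IsProbabilityMeasure ℙ]
    (x : Ω → Fin M → Fin K → ℝ) (hx : Measurable x)
    (habs : (ℙ.map x) ≪ (volume : Measure (Fin M → Fin K → ℝ)))
    (α : Fin M → Fin M → Fin K → ℤ)
    (hα : ∀ (i : Fin M) (j j' : Fin M), j ≠ j' →
      (fun k => α i j k) ≠ (fun k => α i j' k)) :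
    ∀ᵐ ω ∂ℙ, (∀ i k, x ω i k ≠ 0) ∧
      IsUnit (Matrix.of (fun i j : Fin M => ∏ k, (x ω i k) ^ (α i j k))) := by
  classical
  set N : Fin M → Fin K → ℕ := fun i k => Finset.univ.sup fun j => (-(α i j k)).toNat with hNdef
  have hNge : ∀ i j k, (0:ℤ) ≤ α i j k + N i k := by
    intro i j k
    have h1 : (-(α i j k)).toNat ≤ N i k :=
      Finset.le_sup (f := fun j => (-(α i j k)).toNat) (Finset.mem_univ j)
    have h2 : -(α i j k) ≤ ((-(α i j k)).toNat : ℤ) := Int.self_le_toNat _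
    have h3 : (((-(α i j k)).toNat : ℤ)) ≤ (N i k : ℤ) := Int.ofNat_le.mpr h1
    linarith
  set β : Fin M → Fin M → Fin K → ℕ := fun i j k => (α i j k + N i k).toNat with hβdef
  have hβcast : ∀ i j k, (β i j k : ℤ) = α i j k + N i k :=
    fun i j k => Int.toNat_of_nonneg (hNge i j k)
  have hβ : ∀ i j j', j ≠ j' → (fun k => β i j k) ≠ (fun k => β i j' k) := by
    intro i j j' hne heq
    refine hα i j j' hne (funext fun k => ?_)
    have h1 := congrFun heq k
    have h2 : (β i j k : ℤ) = (β i j' k : ℤ) := by exact_mod_cast h1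
    rw [hβcast, hβcast] at h2
    linarith
  set P0 : MvPolynomial (Fin M × Fin K) ℝ := Matrix.det (Matrix.of fun i j : Fin M =>
    ∏ k, (MvPolynomial.X (i,k) : MvPolynomial (Fin M × Fin K) ℝ) ^ β i j k) with hP0def
  have hP0ne : P0 ≠ 0 := det_monomial_ne_zero M K β hβ
  set P : MvPolynomial (Fin M × Fin K) ℝ := P0 * ∏ p : Fin M × Fin K, MvPolynomial.X p with hPdef
  have hPne : P ≠ 0 :=
    mul_ne_zero hP0ne (Finset.prod_ne_zero_iff.mpr fun p _ => MvPolynomial.X_ne_zero _)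
  set Nset : Set (Fin M → Fin K → ℝ) :=
    {y | MvPolynomial.eval (fun p : Fin M × Fin K => y p.1 p.2) P = 0} with hNset
  have hcont : Continuous fun y : Fin M → Fin K → ℝ =>
      MvPolynomial.eval (fun p : Fin M × Fin K => y p.1 p.2) P := by
    apply (MvPolynomial.continuous_eval P).comp
    exact continuous_pi fun p => (continuous_apply p.2).comp (continuous_apply p.1)
  have hNmeas : MeasurableSet Nset := hcont.measurable (measurableSet_singleton 0)
  have hvol : volume Nset = 0 := by
    have hz := mvpoly_zero_null (Fin M × Fin K) P hPne
    have hmeas2 : MeasurableSet {z : Fin M × Fin K → ℝ | MvPolynomial.eval z P = 0} :=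
      (MvPolynomial.continuous_eval P).measurable (measurableSet_singleton 0)
    have hpre : (fun (y : Fin M → Fin K → ℝ) (p : Fin M × Fin K) => y p.1 p.2) ⁻¹'
        {z : Fin M × Fin K → ℝ | MvPolynomial.eval z P = 0} = Nset := rfl
    rw [← hpre, (curry_measurePreserving M K).measure_preimage hmeas2.nullMeasurableSet]
    exact hz
  have hmap : ℙ (x ⁻¹' Nset) = 0 := by
    have h0 := habs hvol
    rwa [Measure.map_apply hx hNmeas] at h0
  filter_upwards [measure_eq_zero_iff_ae_notMem.mp hmap] with ω hω
  set y := x ω with hy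
  have hyP : MvPolynomial.eval (fun p : Fin M × Fin K => y p.1 p.2) P ≠ 0 := hω
  rw [hPdef, map_mul] at hyP
  have h1 : MvPolynomial.eval (fun p : Fin M × Fin K => y p.1 p.2) P0 ≠ 0 :=
    fun h => hyP (by rw [h, zero_mul])
  have h2 : (∏ p : Fin M × Fin K, y p.1 p.2) ≠ 0 := by
    intro h
    apply hyP
    rw [map_prod]
    simp only [MvPolynomial.eval_X]
    rw [h, mul_zero]
  have hynz : ∀ i k, y i k ≠ 0 := by
    intro i k
    exact Finset.prod_ne_zero_iff.mp h2 (i, k) (Finset.mem_univ _)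
  refine ⟨hynz, ?_⟩
  have hdetB : MvPolynomial.eval (fun p : Fin M × Fin K => y p.1 p.2) P0
      = Matrix.det (Matrix.of fun i j : Fin M => ∏ k, y i k ^ β i j k) := by
    rw [hP0def, RingHom.map_det]
    congr 1
    ext i j
    simp [Matrix.map_apply, map_prod, map_pow, MvPolynomial.eval_X]
  have hBA : ∀ i j, (∏ k, y i k ^ β i j k)
      = (∏ k, y i k ^ N i k) * ∏ k, y i k ^ (α i j k) := by
    intro i j
    rw [← Finset.prod_mul_distrib]
    refine Finset.prod_congr rfl fun k _ => ?_
    have hyk := hynz i k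
    calc y i k ^ β i j k = y i k ^ ((β i j k : ℤ)) := (zpow_natCast _ _).symm
      _ = y i k ^ (α i j k + (N i k : ℤ)) := by rw [hβcast]
      _ = y i k ^ (α i j k) * y i k ^ ((N i k : ℤ)) := zpow_add₀ hyk _ _
      _ = y i k ^ N i k * y i k ^ (α i j k) := by rw [zpow_natCast]; ring
  have hdet2 : Matrix.det (Matrix.of fun i j : Fin M => ∏ k, y i k ^ β i j k)
      = (∏ i, ∏ k, y i k ^ N i k)
        * Matrix.det (Matrix.of fun i j : Fin M => ∏ k, y i k ^ (α i j k)) := by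
    have heq : (Matrix.of fun i j : Fin M => ∏ k, y i k ^ β i j k)
        = Matrix.of (fun i j : Fin M => (∏ k, y i k ^ N i k) *
            (Matrix.of fun i j : Fin M => ∏ k, y i k ^ (α i j k)) i j) := by
      ext i j
      exact hBA i j
    rw [heq]
    exact Matrix.det_mul_column _ _
  have hdetne : Matrix.det (Matrix.of fun i j : Fin M => ∏ k, y i k ^ (α i j k)) ≠ 0 := by
    intro h
    apply h1
    rw [hdetB, hdet2, h, mul_zero]
  rw [Matrix.isUnit_iff_isUnit_det]
  exact isUnit_iff_ne_zero.mpr hdetne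
end

section
/- Let M and K be positive integers and let integers \alpha_{i,j,k} (1 \le i,j \le M, 1 \le k \le K) be given such that for every row index i and every pair of distinct column indices j \ne j', the exponent tuples (\alpha_{i,j,1},\dots,\alpha_{i,j,K}) and (\alpha_{i,j',1},\dots,\alpha_{i,j',K}) are not equal. Then there exists a choice of strictly positive reals x_{i,k} > 0 (1 \le i \le M, 1 \le k \le K) such that the M \times M matrix A with entries A_{i,j} = \prod_{k=1}^K x_{i,k}^{\alpha_{i,j,k}} has nonzero determinant. -/
open Finset Polynomial

private lemma exp_zpow_aux (a : ℝ) (n : ℤ) : Real.exp a ^ n = Real.exp (n * a) := by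
  rw [← Real.rpow_intCast, Real.rpow_def_of_pos (Real.exp_pos a), Real.log_exp, mul_comm]

/-- A finite family of nonzero integer vectors admits a common "non-kernel"
evaluation point of Vandermonde type. -/
private lemma exists_common_nonkernel {ι : Type*} [Finite ι] {d : ℕ}
    (v : ι → Fin d → ℤ) (hv : ∀ p, ∃ n, v p n ≠ 0) :
    ∃ θ : ℝ, ∀ p, ∑ n, (v p n : ℝ) * θ ^ (n : ℕ) ≠ 0 := by
  classical
  cases nonempty_fintype ι
  set P : ι → Polynomial ℝ := fun p => ∑ n : Fin d, Polynomial.monomial (n : ℕ) ((v p n : ℝ))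
    with hPdef
  have hcoeff : ∀ p (n : Fin d), (P p).coeff (n : ℕ) = (v p n : ℝ) := by
    intro p n
    rw [hPdef]
    simp only [finset_sum_coeff, coeff_monomial]
    rw [Finset.sum_eq_single n]
    · simp
    · intro m _ hm
      have : (m : ℕ) ≠ (n : ℕ) := fun h => hm (Fin.ext h)
      simp [this]
    · simp
  have hP : ∀ p, P p ≠ 0 := by
    intro p h
    obtain ⟨n, hn⟩ := hv p
    have h2 := hcoeff p n
    rw [h] at h2
    simp only [Polynomial.coeff_zero] at h2
    exact hn (by exact_mod_cast h2.symm)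
  have hfin : (⋃ p, {θ : ℝ | (P p).IsRoot θ}).Finite :=
    Set.finite_iUnion fun p => Polynomial.finite_setOf_isRoot (hP p)
  obtain ⟨θ, hθ⟩ := hfin.infinite_compl.nonempty
  refine ⟨θ, fun p hsum => hθ ?_⟩
  refine Set.mem_iUnion.mpr ⟨p, ?_⟩
  have : (P p).eval θ = ∑ n, (v p n : ℝ) * θ ^ (n : ℕ) := by
    rw [hPdef]
    simp [eval_finset_sum]
  simpa [Polynomial.IsRoot, this] using hsum

/-- A nontrivial finite linear combination of exponentials with distinct
frequencies is somewhere nonzero. -/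
private lemma exists_sum_exp_ne_zero {ι : Type*} [Fintype ι] [Nonempty ι]
    (a : ι → ℝ) (E : ι → ℝ) (ha : ∀ p, a p ≠ 0) (hE : Function.Injective E) :
    ∃ t : ℝ, ∑ p, a p * Real.exp (t * E p) ≠ 0 := by
  classical
  obtain ⟨p₀, hp₀⟩ := Finite.exists_max E
  by_contra h
  push_neg at h
  have hlim : Filter.Tendsto (fun t => ∑ p, a p * Real.exp (t * (E p - E p₀)))
      Filter.atTop (nhds (a p₀)) := by
    have hrw : (nhds (a p₀)) = nhds (∑ p, if p = p₀ then a p₀ else 0) := by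
      rw [Finset.sum_ite_eq' Finset.univ p₀ (fun _ => a p₀)]
      simp
    rw [hrw]
    refine tendsto_finset_sum _ (fun p _ => ?_)
    by_cases hp : p = p₀
    · subst hp
      simpa using tendsto_const_nhds (x := a p * Real.exp 0) |>.congr (by simp)
    · simp only [if_neg hp]
      have hlt : E p - E p₀ < 0 :=
        sub_neg.mpr (lt_of_le_of_ne (hp₀ p) (fun he => hp (hE he)))
      have h1 : Filter.Tendsto (fun t : ℝ => t * (E p - E p₀)) Filter.atTop Filter.atBot :=
        Filter.tendsto_id.atTop_mul_const_of_neg hlt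
      have h2 : Filter.Tendsto (fun t => Real.exp (t * (E p - E p₀)))
          Filter.atTop (nhds 0) := Real.tendsto_exp_atBot.comp h1
      simpa using h2.const_mul (a p)
  have hzero : (fun t => ∑ p, a p * Real.exp (t * (E p - E p₀))) = fun _ => (0 : ℝ) := by
    funext t
    have : ∑ p, a p * Real.exp (t * (E p - E p₀))
        = (∑ p, a p * Real.exp (t * E p)) * Real.exp (-(t * E p₀)) := by
      rw [Finset.sum_mul]
      refine Finset.sum_congr rfl (fun p _ => ?_)
      rw [mul_assoc, ← Real.exp_add]
      ring_nf
    rw [this, h t, zero_mul]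
  rw [hzero] at hlim
  exact ha p₀ (tendsto_nhds_unique tendsto_const_nhds hlim).symm

/-- Deterministic core of the full-rank lemma: if in each row `i` any two
columns `j ≠ j'` have distinct exponent tuples, then there exist strictly
positive reals `x i k` such that the monomial matrix
`A i j = ∏ k, (x i k) ^ (α i j k)` has nonzero determinant. -/
theorem monomial_matrix_det_ne_zero_exists
    (M K : ℕ) (hM : 0 < M) (hK : 0 < K)
    (α : Fin M → Fin M → Fin K → ℤ)
    (hα : ∀ (i : Fin M) (j j' : Fin M), j ≠ j' →
      (fun k => α i j k) ≠ (fun k => α i j' k)) :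
    ∃ x : Fin M → Fin K → ℝ, (∀ i k, 0 < x i k) ∧
      (Matrix.of (fun i j : Fin M => ∏ k, (x i k) ^ (α i j k))).det ≠ 0 := by
  classical
  set e : Fin M × Fin K ≃ Fin (M * K) := finProdFinEquiv with he
  let PP := {p : Equiv.Perm (Fin M) × Equiv.Perm (Fin M) // p.1 ≠ p.2}
  let v : PP → Fin (M * K) → ℤ := fun p n =>
    α (e.symm n).1 (p.1.1 (e.symm n).1) (e.symm n).2
      - α (e.symm n).1 (p.1.2 (e.symm n).1) (e.symm n).2
  have hv : ∀ p, ∃ n, v p n ≠ 0 := by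
    rintro ⟨⟨τ, τ'⟩, hne⟩
    have : ∃ i, τ i ≠ τ' i := by
      by_contra hc
      push_neg at hc
      exact hne (Equiv.ext hc)
    obtain ⟨i, hi⟩ := this
    obtain ⟨k, hk⟩ := Function.ne_iff.mp (hα i (τ i) (τ' i) hi)
    refine ⟨e (i, k), ?_⟩
    simpa [v, sub_ne_zero] using hk
  obtain ⟨θ, hθ⟩ := exists_common_nonkernel v hv
  set c : Fin M → Fin K → ℝ := fun i k => θ ^ ((e (i, k)) : ℕ) with hc
  set Et : Equiv.Perm (Fin M) → ℝ := fun τ => ∑ i, ∑ k, (α i (τ i) k : ℝ) * c i k with hEt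
  have hEinj : Function.Injective Et := by
    intro τ τ' h
    by_contra hne
    refine hθ ⟨(τ, τ'), hne⟩ ?_
    have hre : ∑ n, (v ⟨(τ, τ'), hne⟩ n : ℝ) * θ ^ (n : ℕ)
        = Et τ - Et τ' := by
      rw [← Equiv.sum_comp e (fun n => ((v ⟨(τ, τ'), hne⟩ n : ℝ) * θ ^ (n : ℕ)))]
      rw [Fintype.sum_prod_type, hEt]
      rw [← Finset.sum_sub_distrib]
      refine Finset.sum_congr rfl fun i _ => ?_
      rw [← Finset.sum_sub_distrib]
      refine Finset.sum_congr rfl fun k _ => ?_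
      simp [v, hc, sub_mul]
    rw [hre, h, sub_self]
  have key := exists_sum_exp_ne_zero (fun τ => ((Equiv.Perm.sign τ : ℤ) : ℝ)) Et
    (fun τ => by rcases Int.units_eq_one_or (Equiv.Perm.sign τ) with h | h <;> simp [h]) hEinj
  obtain ⟨t, ht⟩ := key
  refine ⟨fun i k => Real.exp (t * c i k), fun i k => Real.exp_pos _, ?_⟩
  rw [← Matrix.det_transpose, Matrix.det_apply']
  have hentry : ∀ σ : Equiv.Perm (Fin M),
      ∏ i, ∏ k, Real.exp (t * c i k) ^ (α i (σ i) k) = Real.exp (t * Et σ) := by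
    intro σ
    have hz : ∀ i k, Real.exp (t * c i k) ^ (α i (σ i) k)
        = Real.exp ((α i (σ i) k : ℝ) * (t * c i k)) := fun i k => exp_zpow_aux _ _
    simp only [hz, ← Real.exp_sum]
    congr 1
    rw [hEt, Finset.mul_sum]
    refine Finset.sum_congr rfl (fun i _ => ?_)
    rw [Finset.mul_sum]
    exact Finset.sum_congr rfl (fun k _ => by ring)
  refine ne_of_eq_of_ne (Finset.sum_congr rfl fun σ _ => ?_) ht
  congr 1
  rw [← hentry σ]
  exact Finset.prod_congr rfl fun i _ => by simp
end

section
/- Let \mu, \Gamma, M be positive integers with M \le \mu. Let t = (t_k(s))_{k \in \{1,\dots,\Gamma\}, s \in \{1,\dots,\mu\}} be a random vector in \mathbb{R}^{\Gamma\mu} whose joint distribution is absolutely continuous with respect to Lebesgue measure on \mathbb{R}^{\Gamma\mu}. Let \alpha^{(1)},\dots,\alpha^{(M)} : \{1,\dots,\Gamma\} \to \mathbb{Z} be pairwise distinct exponent tuples. Then, with probability 1, all t_k(s) are nonzero and the vectors v_1,\dots,v_M \in \mathbb{R}^{\mu}, where the s-th entry of v_j is \prod_{k=1}^{\Gamma}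 t_k(s)^{\alpha^{(j)}_k}, are linearly independent. -/
open MeasureTheory

open MvPolynomial


lemma poly_zero_set_null : ∀ (n : ℕ) (p : MvPolynomial (Fin n) ℝ), p ≠ 0 →
    volume {x : Fin n → ℝ | MvPolynomial.eval x p = 0} = 0 := by
  intro n
  induction n with
  | zero =>
    intro p hp
    obtain ⟨a, rfl⟩ := MvPolynomial.C_surjective (Fin 0) p
    have ha : a ≠ 0 := fun h => hp (by simp [h])
    have : {x : Fin 0 → ℝ | MvPolynomial.eval x (C a) = 0} = ∅ := by
      ext x; simp [ha]
    rw [this, measure_empty]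
  | succ n ih =>
    intro p hp
    set q : Polynomial (MvPolynomial (Fin n) ℝ) := MvPolynomial.finSuccEquiv ℝ n p with hq
    have hqne : q ≠ 0 := by
      intro h
      exact hp ((map_eq_zero_iff _ (AlgEquiv.injective _)).mp h)
    obtain ⟨d, hd⟩ : ∃ d, q.coeff d ≠ 0 := by
      by_contra h
      push_neg at h
      exact hqne (Polynomial.ext fun m => by simp [h m])
    -- the map φ
    set e := MeasurableEquiv.piFinSuccAbove (fun _ : Fin (n+1) => ℝ) 0 with he
    set φ : (Fin (n+1) → ℝ) → (Fin n → ℝ) × ℝ := fun x => (Prod.swap (e x)) with hφ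
    have hmp : MeasurePreserving φ volume volume := by
      have h1 := MeasureTheory.volume_preserving_piFinSuccAbove (fun _ : Fin (n+1) => ℝ) 0
      have h2 : MeasurePreserving (Prod.swap : ℝ × (Fin n → ℝ) → (Fin n → ℝ) × ℝ) volume volume := by
        rw [MeasureTheory.Measure.volume_eq_prod, MeasureTheory.Measure.volume_eq_prod]
        exact Measure.measurePreserving_swap
      exact h2.comp h1
    set W : Set ((Fin n → ℝ) × ℝ) :=
      {z | Polynomial.eval z.2 (Polynomial.map (MvPolynomial.eval z.1) q) = 0} with hW
    have hWmeas : MeasurableSet W := by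
      have hfun : (fun z : (Fin n → ℝ) × ℝ =>
          Polynomial.eval z.2 (Polynomial.map (MvPolynomial.eval z.1) q)) =
          fun z => ∑ d ∈ Finset.range (q.natDegree + 1),
            MvPolynomial.eval z.1 (q.coeff d) * z.2 ^ d := by
        funext z
        rw [Polynomial.eval_map, Polynomial.eval₂_eq_sum_range]
      have : Measurable (fun z : (Fin n → ℝ) × ℝ =>
          Polynomial.eval z.2 (Polynomial.map (MvPolynomial.eval z.1) q)) := by
        rw [hfun]
        refine Finset.measurable_sum _ fun d _ => ?_
        exact ((MvPolynomial.continuous_eval _).measurable.comp measurable_fst).mul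
          ((measurable_snd.pow_const d))
      exact this (measurableSet_singleton 0)
    have hZW : {x : Fin (n+1) → ℝ | MvPolynomial.eval x p = 0} = φ ⁻¹' W := by
      ext x
      have hx : MvPolynomial.eval x p
          = Polynomial.eval (x 0) (Polynomial.map (MvPolynomial.eval (Fin.removeNth 0 x)) q) := by
        have h1 : x = Fin.cons (x 0) (Fin.removeNth 0 x) := by
          funext j
          refine Fin.cases ?_ ?_ j
          · simp
          · intro i
            simp [Fin.removeNth, Fin.zero_succAbove, Fin.tail]
        conv_lhs => rw [h1]
        rw [hq]
        exact MvPolynomial.eval_eq_eval_mv_eval' _ _ _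
      simp only [Set.mem_setOf_eq, Set.mem_preimage, hW, hφ]
      rw [hx]
      rfl
    rw [hZW, hmp.measure_preimage hWmeas.nullMeasurableSet]
    rw [MeasureTheory.Measure.volume_eq_prod]
    rw [Measure.measure_prod_null hWmeas]
    have hbad : volume {y : Fin n → ℝ | MvPolynomial.eval y (q.coeff d) = 0} = 0 := ih _ hd
    have hae : ∀ᵐ y : (Fin n → ℝ) ∂volume, Polynomial.map (MvPolynomial.eval y) q ≠ 0 := by
      rw [ae_iff]
      refine measure_mono_null ?_ hbad
      intro y hy
      simp only [Set.mem_setOf_eq, not_not] at hy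
      simp only [Set.mem_setOf_eq]
      have := congrArg (fun r => r.coeff d) hy
      simpa [Polynomial.coeff_map] using this
    filter_upwards [hae] with y hy
    have hfin : {a : ℝ | (y, a) ∈ W}.Finite := Polynomial.finite_setOf_isRoot hy
    show volume (Prod.mk y ⁻¹' W) = 0
    exact measure_mono_null (fun a ha => ha) (hfin.measure_zero _)

lemma poly_zero_set_null_fintype {ι : Type*} [Fintype ι] (p : MvPolynomial ι ℝ) (hp : p ≠ 0) :
    volume {x : ι → ℝ | MvPolynomial.eval x p = 0} = 0 := by
  classical
  set n := Fintype.card ι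
  set e : ι ≃ Fin n := Fintype.equivFin ι with he
  set q : MvPolynomial (Fin n) ℝ := MvPolynomial.rename e p with hqdef
  have hqne : q ≠ 0 := fun h => hp (MvPolynomial.rename_injective _ e.injective (by simpa using h))
  have hnull := poly_zero_set_null n q hqne
  set E := MeasurableEquiv.piCongrLeft (fun _ : Fin n => ℝ) e with hE
  have hmp : MeasurePreserving E volume volume :=
    volume_measurePreserving_piCongrLeft _ e
  have hmeas : MeasurableSet {x' : Fin n → ℝ | MvPolynomial.eval x' q = 0} :=
    (MvPolynomial.continuous_eval q).measurable (measurableSet_singleton 0)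
  have hpre : E ⁻¹' {x' : Fin n → ℝ | MvPolynomial.eval x' q = 0}
      = {x : ι → ℝ | MvPolynomial.eval x p = 0} := by
    ext x
    simp only [Set.mem_preimage, Set.mem_setOf_eq, hqdef]
    rw [MvPolynomial.eval_rename]
    have : (E x) ∘ e = x := by
      funext a
      exact Equiv.piCongrLeft_apply_apply (fun _ : Fin n => ℝ) e x a
    rw [this]
  rw [← hpre, hmp.measure_preimage hmeas.nullMeasurableSet]
  exact hnull

lemma curry_measurePreserving_s5 (Γ μ' : ℕ) :
    MeasurePreserving (fun (x : Fin Γ → Fin μ' → ℝ) (q : Fin Γ × Fin μ') => x q.1 q.2)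
      volume volume := by
  set m := fun (x : Fin Γ → Fin μ' → ℝ) (q : Fin Γ × Fin μ') => x q.1 q.2 with hm
  have hmeas : Measurable m :=
    measurable_pi_lambda _ fun q => (measurable_pi_apply q.2).comp (measurable_pi_apply q.1)
  refine ⟨hmeas, ?_⟩
  have : (volume : Measure (Fin Γ × Fin μ' → ℝ)) = Measure.pi fun _ => volume := volume_pi
  rw [this]
  refine (Measure.pi_eq fun s hs => ?_).symm
  rw [Measure.map_apply hmeas (MeasurableSet.univ_pi hs)]
  have hpre : m ⁻¹' (Set.pi Set.univ s)
      = Set.pi Set.univ fun k : Fin Γ => Set.pi Set.univ fun j : Fin μ' => s (k, j) := by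
    ext x
    simp only [Set.mem_preimage, Set.mem_pi, Set.mem_univ, forall_true_left, Prod.forall, hm]
  rw [hpre]
  rw [volume_pi_pi]
  rw [Fintype.prod_prod_type]
  exact Finset.prod_congr rfl fun k _ => (volume_pi_pi _)

lemma exists_sample_det_ne_zero : ∀ (M : ℕ) {X : Type*} (f : Fin M → X → ℝ),
    LinearIndependent ℝ f →
    ∃ x : Fin M → X, (Matrix.of fun i j => f j (x i)).det ≠ 0 := by
  intro M
  induction M with
  | zero =>
    intro X f _
    exact ⟨Fin.elim0, by simp [Matrix.det_fin_zero]⟩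
  | succ n ih =>
    intro X f hf
    have hf' : LinearIndependent ℝ (f ∘ Fin.succ) := hf.comp _ (Fin.succ_injective n)
    obtain ⟨x', hx'⟩ := ih (f ∘ Fin.succ) hf'
    by_contra hcon
    push_neg at hcon
    set c : Fin (n+1) → ℝ := fun j =>
      (-1 : ℝ) ^ (j : ℕ) * (Matrix.of fun (i : Fin n) (i' : Fin n) => f (j.succAbove i') (x' i)).det
      with hc
    have hmat : ∀ (y : X) (j : Fin (n+1)),
        (Matrix.of fun (i : Fin (n+1)) (j' : Fin (n+1)) => f j' ((Fin.cons y x' : Fin (n+1) → X) i)).submatrix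
          Fin.succ j.succAbove
        = Matrix.of fun (i : Fin n) (i' : Fin n) => f (j.succAbove i') (x' i) := by
      intro y j
      ext i i'
      simp [Matrix.submatrix_apply]
    have hzero : ∀ y : X, ∑ j, c j * f j y = 0 := by
      intro y
      have hdet := hcon (Fin.cons y x')
      rw [Matrix.det_succ_row_zero] at hdet
      simp only [hmat, Matrix.of_apply, Fin.cons_zero] at hdet
      rw [← hdet]
      refine Finset.sum_congr rfl fun j _ => ?_
      rw [hc]
      ring
    have hall := Fintype.linearIndependent_iff.mp hf c ?_
    · have h0 := hall 0
      rw [hc] at h0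
      simp only [Fin.val_zero, pow_zero, one_mul] at h0
      apply hx'
      have : (Matrix.of fun i j => (f ∘ Fin.succ) j (x' i))
          = Matrix.of fun (i : Fin n) (i' : Fin n) => f ((0 : Fin (n+1)).succAbove i') (x' i) := by
        ext i i'
        simp [Fin.zero_succAbove]
      rw [this, h0]
    · funext y
      have := hzero y
      simpa [Finset.sum_apply] using this

lemma monomial_funs_linearIndependent {Γ M : ℕ} (β : Fin M → Fin Γ → ℕ)
    (hβ : Function.Injective β) :
    LinearIndependent ℝ (fun (j : Fin M) (y : {y : Fin Γ → ℝ // ∀ k, y k ≠ 0}) =>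
      ∏ k, (y : Fin Γ → ℝ) k ^ β j k) := by
  classical
  rw [Fintype.linearIndependent_iff]
  intro c hc
  set m : Fin M → (Fin Γ →₀ ℕ) := fun j => Finsupp.equivFunOnFinite.symm (β j) with hm
  have hminj : Function.Injective m := fun a b h => hβ (Finsupp.equivFunOnFinite.symm.injective h)
  set q : MvPolynomial (Fin Γ) ℝ := ∑ j, MvPolynomial.monomial (m j) (c j) with hqdef
  have heval : ∀ y : Fin Γ → ℝ, MvPolynomial.eval y q = ∑ j, c j * ∏ k, y k ^ β j k := by
    intro y
    rw [hqdef, map_sum]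
    refine Finset.sum_congr rfl fun j _ => ?_
    rw [MvPolynomial.eval_monomial]
    congr 1
    rw [Finsupp.prod_fintype _ _ (fun k => pow_zero _)]
    simp [hm]
  have hq0 : q = 0 := by
    by_contra hqne
    have h1 := poly_zero_set_null_fintype q hqne
    have h2 : ((∏ k : Fin Γ, MvPolynomial.X k) : MvPolynomial (Fin Γ) ℝ) ≠ 0 :=
      Finset.prod_ne_zero_iff.mpr fun k _ => MvPolynomial.X_ne_zero (R := ℝ) k
    have h3 := poly_zero_set_null_fintype _ h2
    have hcover : (Set.univ : Set (Fin Γ → ℝ)) ⊆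
        {y | MvPolynomial.eval y q = 0} ∪
        {y | MvPolynomial.eval y ((∏ k : Fin Γ, MvPolynomial.X k)) = 0} := by
      intro y _
      by_cases hy : ∀ k, y k ≠ 0
      · left
        have hcy := congrFun hc (⟨y, hy⟩ : {y : Fin Γ → ℝ // ∀ k, y k ≠ 0})
        simp only [Finset.sum_apply, Pi.smul_apply, smul_eq_mul, Pi.zero_apply] at hcy
        rw [Set.mem_setOf_eq, heval]
        exact hcy
      · right
        push_neg at hy
        obtain ⟨k, hk⟩ := hy
        rw [Set.mem_setOf_eq, map_prod]
        simp only [MvPolynomial.eval_X]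
        exact Finset.prod_eq_zero (Finset.mem_univ k) hk
    have hnull : volume (Set.univ : Set (Fin Γ → ℝ)) = 0 :=
      measure_mono_null hcover (measure_union_null h1 h3)
    have hbox : volume (Set.pi Set.univ fun _ : Fin Γ => Set.Ioo (0:ℝ) 1) = 1 := by
      rw [volume_pi_pi]; simp
    have hle := measure_mono_null (Set.subset_univ
      (Set.pi Set.univ fun _ : Fin Γ => Set.Ioo (0:ℝ) 1)) hnull
    rw [hbox] at hle
    exact one_ne_zero hle
  intro j
  have hco := congrArg (MvPolynomial.coeff (m j)) hq0
  rw [hqdef, MvPolynomial.coeff_sum] at hco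
  simp only [MvPolynomial.coeff_monomial, MvPolynomial.coeff_zero] at hco
  have hsw : (∑ j', if m j' = m j then c j' else 0) = ∑ j', if j' = j then c j' else 0 := by
    refine Finset.sum_congr rfl fun j' _ => ?_
    by_cases h : j' = j
    · simp [h]
    · rw [if_neg h, if_neg (fun hmm => h (hminj hmm))]
  rw [hsw] at hco
  rwa [Finset.sum_ite_eq' Finset.univ j c, if_pos (Finset.mem_univ j)] at hco

/-- Monomial vectors with pairwise distinct exponent tuples, evaluated at
random variables whose joint law is absolutely continuous w.r.t. Lebesgue
measure, are almost surely linearly independent (and all variables are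
almost surely nonzero). -/
theorem monomial_vectors_linearIndependent_as
    (μ Γ M : ℕ) (hμ : 0 < μ) (hΓ : 0 < Γ) (hM : 0 < M) (hMμ : M ≤ μ)
    {Ω : Type*} [MeasurableSpace Ω] (ℙ : Measure Ω) [IsProbabilityMeasure ℙ]
    (t : Ω → Fin Γ → Fin μ → ℝ) (ht : Measurable t)
    (habs : (ℙ.map t) ≪ (volume : Measure (Fin Γ → Fin μ → ℝ)))
    (α : Fin M → Fin Γ → ℤ)
    (hα : ∀ j j' : Fin M, j ≠ j' → α j ≠ α j') :
    ∀ᵐ ω ∂ℙ, (∀ k s, t ω k s ≠ 0) ∧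
      LinearIndependent ℝ
        (fun j : Fin M => (fun s : Fin μ => ∏ k, (t ω k s) ^ (α j k))) := by
  classical
  -- exponent shift
  set N : ℕ := Finset.univ.sup (fun jk : Fin M × Fin Γ => (α jk.1 jk.2).natAbs) with hN
  have hNle : ∀ j k, 0 ≤ α j k + N := by
    intro j k
    have h1 : (α j k).natAbs ≤ N :=
      Finset.le_sup (f := fun jk : Fin M × Fin Γ => (α jk.1 jk.2).natAbs)
        (Finset.mem_univ (j, k))
    have h1' : ((α j k).natAbs : ℤ) ≤ (N : ℤ) := Int.ofNat_le.mpr h1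
    have h2 : -(α j k) ≤ ((α j k).natAbs : ℤ) := by
      rw [← Int.abs_eq_natAbs]
      exact neg_le_abs _
    linarith
  set β : Fin M → Fin Γ → ℕ := fun j k => (α j k + N).toNat with hβdef
  have hβcast : ∀ j k, (β j k : ℤ) = α j k + N := fun j k => Int.toNat_of_nonneg (hNle j k)
  have hβinj : Function.Injective β := by
    intro a b h
    by_contra hne
    refine hα a b hne (funext fun k => ?_)
    have hk : (β a k : ℤ) = (β b k : ℤ) := by exact_mod_cast congrFun h k
    have h1 := hβcast a k
    have h2 := hβcast b k
    linarith
  set e : Fin M → Fin μ := fun i => Fin.castLE hMμ i with he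
  -- sample points
  obtain ⟨z, hz⟩ := exists_sample_det_ne_zero M _ (monomial_funs_linearIndependent β hβinj)
  -- the polynomial
  set P : MvPolynomial (Fin Γ × Fin μ) ℝ :=
    (∏ q : Fin Γ × Fin μ, MvPolynomial.X q) *
      (Matrix.of fun i j : Fin M =>
        ∏ k, (MvPolynomial.X (k, e i) : MvPolynomial (Fin Γ × Fin μ) ℝ) ^ β j k).det with hPdef
  have hevalP : ∀ x : Fin Γ × Fin μ → ℝ, MvPolynomial.eval x P =
      (∏ q, x q) * (Matrix.of fun i j : Fin M => ∏ k, x (k, e i) ^ β j k).det := by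
    intro x
    rw [hPdef, map_mul, map_prod]
    congr 1
    · exact Finset.prod_congr rfl fun q _ => MvPolynomial.eval_X _
    · rw [RingHom.map_det]
      congr 1
      ext i j
      simp [Matrix.map_apply]
  -- P is nonzero
  have hP : P ≠ 0 := by
    set g : Fin μ → Fin Γ → ℝ := fun s =>
      if h : (s : ℕ) < M then (z ⟨(s : ℕ), h⟩ : Fin Γ → ℝ) else fun _ => 1 with hg
    set x₀ : Fin Γ × Fin μ → ℝ := fun q => g q.2 q.1 with hx₀
    have hgne : ∀ s k, g s k ≠ 0 := by
      intro s k
      by_cases hs : (s : ℕ) < M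
      · have hgs : g s = (z ⟨(s : ℕ), hs⟩ : Fin Γ → ℝ) := by rw [hg]; exact dif_pos hs
        rw [hgs]
        exact (z _).2 k
      · have hgs : g s = fun _ => 1 := by rw [hg]; exact dif_neg hs
        rw [hgs]
        exact one_ne_zero
    have hgei : ∀ i : Fin M, g (e i) = (z i : Fin Γ → ℝ) := by
      intro i
      have h' : ((e i : ℕ)) < M := i.isLt
      rw [hg]
      exact dif_pos h'
    have h1 : MvPolynomial.eval x₀ P ≠ 0 := by
      rw [hevalP]
      refine mul_ne_zero (Finset.prod_ne_zero_iff.mpr fun q _ => hgne q.2 q.1) ?_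
      have heq : (Matrix.of fun i j : Fin M => ∏ k, x₀ (k, e i) ^ β j k)
          = Matrix.of fun i j : Fin M =>
              (fun (j : Fin M) (y : {y : Fin Γ → ℝ // ∀ k, y k ≠ 0}) =>
                ∏ k, (y : Fin Γ → ℝ) k ^ β j k) j (z i) := by
        ext i j
        simp only [Matrix.of_apply, hx₀]
        refine Finset.prod_congr rfl fun k _ => ?_
        rw [hgei i]
      rw [heq]
      exact hz
    intro h0
    rw [h0] at h1
    simp at h1
  -- null set
  set Y : Set (Fin Γ × Fin μ → ℝ) := {y | MvPolynomial.eval y P = 0} with hY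
  have hYmeas : MeasurableSet Y :=
    (MvPolynomial.continuous_eval P).measurable (measurableSet_singleton 0)
  have hYnull : volume Y = 0 := poly_zero_set_null_fintype P hP
  set m := fun (x : Fin Γ → Fin μ → ℝ) (q : Fin Γ × Fin μ) => x q.1 q.2 with hmdef
  set Zset : Set (Fin Γ → Fin μ → ℝ) := m ⁻¹' Y with hZ
  have hZmeas : MeasurableSet Zset := (curry_measurePreserving_s5 Γ μ).measurable hYmeas
  have hZnull : volume Zset = 0 := by
    rw [hZ, (curry_measurePreserving_s5 Γ μ).measure_preimage hYmeas.nullMeasurableSet]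
    exact hYnull
  have hpre0 : ℙ (t ⁻¹' Zset) = 0 := by
    rw [← Measure.map_apply ht hZmeas]
    exact habs hZnull
  have hae : ∀ᵐ ω ∂ℙ, t ω ∉ Zset := by
    rw [ae_iff]
    have hset : {ω | ¬ t ω ∉ Zset} = t ⁻¹' Zset := by
      ext ω
      simp [Set.mem_preimage]
    rw [hset]
    exact hpre0
  filter_upwards [hae] with ω hω
  have hne : MvPolynomial.eval (fun q : Fin Γ × Fin μ => t ω q.1 q.2) P ≠ 0 := hω
  rw [hevalP] at hne
  have hprod := left_ne_zero_of_mul hne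
  have hdetA := right_ne_zero_of_mul hne
  have hcoord : ∀ k s, t ω k s ≠ 0 := fun k s =>
    Finset.prod_ne_zero_iff.mp hprod (k, s) (Finset.mem_univ _)
  refine ⟨hcoord, ?_⟩
  set B : Matrix (Fin M) (Fin M) ℝ :=
    Matrix.of fun i j => ∏ k, (t ω k (e i)) ^ (α j k) with hB
  have hAB : (Matrix.of fun i j : Fin M =>
        ∏ k, (fun q : Fin Γ × Fin μ => t ω q.1 q.2) (k, e i) ^ β j k)
      = Matrix.of fun i j : Fin M => (∏ k, t ω k (e i) ^ (N : ℕ)) * B i j := by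
    ext i j
    simp only [Matrix.of_apply, hB]
    rw [← Finset.prod_mul_distrib]
    refine Finset.prod_congr rfl fun k _ => ?_
    have hr := hcoord k (e i)
    rw [← zpow_natCast (t ω k (e i)) (β j k), hβcast j k, add_comm (α j k) (N : ℤ),
      zpow_add₀ hr, zpow_natCast]
  have hdetB : B.det ≠ 0 := by
    rw [hAB, Matrix.det_mul_column] at hdetA
    exact right_ne_zero_of_mul hdetA
  have hunit : IsUnit B := (Matrix.isUnit_iff_isUnit_det B).mpr (isUnit_iff_ne_zero.mpr hdetB)
  have hcols : LinearIndependent ℝ (fun j => Matrix.transpose B j) :=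
    Matrix.linearIndependent_cols_iff_isUnit.mpr hunit
  refine LinearIndependent.of_comp (LinearMap.funLeft ℝ ℝ e) ?_
  have hcomp : (⇑(LinearMap.funLeft ℝ ℝ e) ∘
      fun j : Fin M => (fun s : Fin μ => ∏ k, (t ω k s) ^ (α j k)))
      = fun j => Matrix.transpose B j := by
    funext j
    funext i
    simp [LinearMap.funLeft_apply, hB, Matrix.transpose_apply]
  rw [hcomp]
  exact hcols
end
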